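/- arXiv:1612.02542 — 3 statements merged into one kernel-verified Lean document; each statement's English description precedes it below -/
import Mathlib

section
/- Let Y and X be finite nonempty sets, let p be a probability mass function on Y, let (φ_y)_{y∈Y} be probability mass functions on X, and let Q be a probability mass function on X. Then D(Σ_{y∈Y} p(y) φ_y ‖ Q) + log |Y| ≥ min { D(φ_y‖Q) : y ∈ Y, p(y) > 0 }, as an inequality in [0,∞]. -/
open scoped BigOperators ENNReal

/-- Kullback–Leibler divergence between two probability mass functions on a finite set,
valued in `[0,∞]`, with the conventions `0 · log(0/q) = 0` and `D(P‖Q) = ∞` if `P` is not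
absolutely continuous with respect to `Q`. -/
noncomputable def klDiv {X : Type*} [Fintype X] (P Q : X → ℝ) : ℝ≥0∞ :=
  if ∀ x, Q x = 0 → P x = 0 then
    ENNReal.ofReal (∑ x, P x * Real.log (P x / Q x))
  else ⊤

/-!
Write `M = ∑_y p(y) φ_y` for the mixture; if `M` is not absolutely continuous with respect to `Q`
the right-hand side is `∞`. Otherwise, since `p(y) φ_y ≤ M`, each `φ_y` with `p(y) > 0` satisfies
`D(φ_y‖Q) ≤ ∑_x φ_y(x) log (M(x)/Q(x)) + log (1/p(y))`. Averaging over `y` with weights `p` gives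
`∑_y p(y) D(φ_y‖Q) ≤ D(M‖Q) + H(p) ≤ D(M‖Q) + log |Y|`, and the minimum over the support of `p`
is at most this average.
-/

open Real Finset

lemma mul_log_div_le_mul_log_div_sub {a m q c : ℝ} (hc : 0 < c) (ha : 0 ≤ a) (hcam : c * a ≤ m)
    (hq : q = 0 → a = 0) : a * log (a / q) ≤ a * log (m / q) - a * log c := by
  rcases ha.eq_or_lt with rfl | ha
  · simp
  have hq : q ≠ 0 := fun h => ha.ne' (hq h)
  have hm : 0 < m := (mul_pos hc ha).trans_le hcam
  have hlog : log c + log a ≤ log m := by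
    rw [← log_mul hc.ne' ha.ne']
    exact log_le_log (mul_pos hc ha) hcam
  rw [log_div ha.ne' hq, log_div hm.ne' hq]
  linarith [mul_le_mul_of_nonneg_left hlog ha.le]

lemma sum_negMulLog_le_log_card {ι : Type*} [Fintype ι] {p : ι → ℝ} (hp0 : ∀ i, 0 ≤ p i)
    (hp1 : ∑ i, p i = 1) : ∑ i, negMulLog (p i) ≤ log (Fintype.card ι) := by
  set n : ℝ := (Fintype.card ι : ℝ)
  have hn : 0 < n := by
    have : Nonempty ι := (nonempty_of_sum_ne_zero (hp1.trans_ne one_ne_zero)).to_type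
    exact Nat.cast_pos.mpr Fintype.card_pos
  have key : ∀ i, n * negMulLog (p i) ≤ 1 - n * p i + n * p i * log n := fun i => by
    have := negMulLog_le_one_sub_self (mul_nonneg (hp0 i) hn.le)
    rw [negMulLog_mul] at this
    simp only [negMulLog] at this ⊢
    linarith
  refine le_of_mul_le_mul_left ?_ hn
  calc n * ∑ i, negMulLog (p i) ≤ ∑ i, (1 - n * p i + n * p i * log n) := by
        rw [mul_sum]
        exact sum_le_sum fun i _ => key i
    _ = n * log n := by
        simp only [sum_add_distrib, sum_sub_distrib, ← mul_sum, ← sum_mul, hp1, sum_const,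
          card_univ, nsmul_eq_mul, n]
        ring

lemma exists_pos_weight_le_sum_mul {ι : Type*} [Fintype ι] {p : ι → ℝ} (hp0 : ∀ i, 0 ≤ p i)
    (hp1 : ∑ i, p i = 1) (f : ι → ℝ) : ∃ i, 0 < p i ∧ f i ≤ ∑ j, p j * f j := by
  by_contra! h
  obtain ⟨i₀, -, hne⟩ := exists_ne_zero_of_sum_ne_zero (hp1.trans_ne one_ne_zero)
  have hi₀ : 0 < p i₀ := (hp0 i₀).lt_of_ne' hne
  have hlt : ∑ i, p i * ∑ j, p j * f j < ∑ i, p i * f i := by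
    refine sum_lt_sum (fun i _ => ?_) ⟨i₀, mem_univ _, mul_lt_mul_of_pos_left (h i₀ hi₀) hi₀⟩
    rcases (hp0 i).eq_or_lt with hi | hi
    · simp [← hi]
    · exact mul_le_mul_of_nonneg_left (h i hi).le hi.le
  rw [← sum_mul, hp1, one_mul] at hlt
  exact lt_irrefl _ hlt

lemma mul_le_sum_mul {Y X : Type*} [Fintype Y] {p : Y → ℝ} {φ : Y → X → ℝ}
    (hp0 : ∀ y, 0 ≤ p y) (hφ0 : ∀ y x, 0 ≤ φ y x) (y : Y) (x : X) :
    p y * φ y x ≤ ∑ y', p y' * φ y' x :=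
  single_le_sum (f := fun y' => p y' * φ y' x) (fun y' _ => mul_nonneg (hp0 y') (hφ0 y' x))
    (mem_univ y)

lemma eq_zero_of_mixture_eq_zero {Y X : Type*} [Fintype Y] {p : Y → ℝ} {φ : Y → X → ℝ}
    {Q : X → ℝ} (hp0 : ∀ y, 0 ≤ p y) (hφ0 : ∀ y x, 0 ≤ φ y x)
    (hM : ∀ x, Q x = 0 → ∑ y, p y * φ y x = 0) {y : Y} (hy : 0 < p y) :
    ∀ x, Q x = 0 → φ y x = 0 := fun x hx =>
  le_antisymm
    (nonpos_of_mul_nonpos_right ((mul_le_sum_mul hp0 hφ0 y x).trans (hM x hx).le) hy)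
    (hφ0 y x)

section KL

variable {X : Type*} [Fintype X]

noncomputable def klDivReal (P Q : X → ℝ) : ℝ :=
  ∑ x, P x * log (P x / Q x)

lemma klDiv_eq_ofReal_klDivReal {P Q : X → ℝ} (h : ∀ x, Q x = 0 → P x = 0) :
    klDiv P Q = ENNReal.ofReal (klDivReal P Q) :=
  if_pos h

lemma klDiv_eq_top {P Q : X → ℝ} (h : ¬∀ x, Q x = 0 → P x = 0) : klDiv P Q = ⊤ :=
  if_neg h

-- `D(P‖Q) = ∑ P log (M/Q) + D(P‖M)`, and `D(P‖M) ≤ log (1/c)` because `c P ≤ M`.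
lemma klDivReal_le_sum_mul_log_div_sub_log {P M Q : X → ℝ} {c : ℝ} (hc : 0 < c)
    (hP0 : ∀ x, 0 ≤ P x) (hP1 : ∑ x, P x = 1) (hPM : ∀ x, c * P x ≤ M x)
    (hPQ : ∀ x, Q x = 0 → P x = 0) :
    klDivReal P Q ≤ ∑ x, P x * log (M x / Q x) - log c :=
  calc klDivReal P Q ≤ ∑ x, (P x * log (M x / Q x) - P x * log c) :=
        sum_le_sum fun x _ => mul_log_div_le_mul_log_div_sub hc (hP0 x) (hPM x) (hPQ x)
    _ = ∑ x, P x * log (M x / Q x) - log c := by rw [sum_sub_distrib, ← sum_mul, hP1, one_mul]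

variable {Y : Type*} [Fintype Y] {p : Y → ℝ} {φ : Y → X → ℝ} {Q : X → ℝ}

lemma sum_mul_klDivReal_le_klDivReal_mixture_add_entropy (hp0 : ∀ y, 0 ≤ p y)
    (hφ0 : ∀ y x, 0 ≤ φ y x) (hφ1 : ∀ y, ∑ x, φ y x = 1)
    (hM : ∀ x, Q x = 0 → ∑ y, p y * φ y x = 0) :
    ∑ y, p y * klDivReal (φ y) Q ≤
      klDivReal (fun x => ∑ y, p y * φ y x) Q + ∑ y, negMulLog (p y) := by
  set M : X → ℝ := fun x => ∑ y, p y * φ y x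
  have hcomponent : ∀ y, p y * klDivReal (φ y) Q ≤
      ∑ x, p y * φ y x * log (M x / Q x) + negMulLog (p y) := by
    intro y
    rcases (hp0 y).eq_or_lt with hy | hy
    · simp [← hy]
    calc p y * klDivReal (φ y) Q ≤ p y * (∑ x, φ y x * log (M x / Q x) - log (p y)) :=
          mul_le_mul_of_nonneg_left (klDivReal_le_sum_mul_log_div_sub_log hy (hφ0 y) (hφ1 y)
            (mul_le_sum_mul hp0 hφ0 y) (eq_zero_of_mixture_eq_zero hp0 hφ0 hM hy)) hy.le
      _ = ∑ x, p y * φ y x * log (M x / Q x) + negMulLog (p y) := by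
          simp only [mul_sub, mul_sum, negMulLog, mul_assoc]
          ring
  calc ∑ y, p y * klDivReal (φ y) Q
      ≤ ∑ y, (∑ x, p y * φ y x * log (M x / Q x) + negMulLog (p y)) :=
        sum_le_sum fun y _ => hcomponent y
    _ = klDivReal M Q + ∑ y, negMulLog (p y) := by
        rw [sum_add_distrib, sum_comm]
        simp only [← sum_mul]
        rfl

end KL

theorem klDiv_mixture_add_log_card_ge_min_general
    {Y X : Type*} [Fintype Y] [Fintype X]
    (p : Y → ℝ) (φ : Y → X → ℝ) (Q : X → ℝ)
    (hp0 : ∀ y, 0 ≤ p y) (hp1 : ∑ y, p y = 1)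
    (hφ0 : ∀ y x, 0 ≤ φ y x) (hφ1 : ∀ y, ∑ x, φ y x = 1) :
    ⨅ y : {y : Y // 0 < p y}, klDiv (φ y) Q ≤
      klDiv (fun x => ∑ y, p y * φ y x) Q
        + ENNReal.ofReal (Real.log (Fintype.card Y)) := by
  by_cases hM : ∀ x, Q x = 0 → ∑ y, p y * φ y x = 0
  swap
  · simp [klDiv_eq_top hM]
  obtain ⟨y, hy, hle⟩ := exists_pos_weight_le_sum_mul hp0 hp1 fun y => klDivReal (φ y) Q
  have hbound : klDivReal (φ y) Q ≤
      klDivReal (fun x => ∑ y, p y * φ y x) Q + log (Fintype.card Y) :=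
    hle.trans <| (sum_mul_klDivReal_le_klDivReal_mixture_add_entropy hp0 hφ0 hφ1 hM).trans <|
      add_le_add le_rfl (sum_negMulLog_le_log_card hp0 hp1)
  calc ⨅ y : {y : Y // 0 < p y}, klDiv (φ y) Q
      ≤ klDiv (φ y) Q := iInf_le _ (⟨y, hy⟩ : {y : Y // 0 < p y})
    _ = ENNReal.ofReal (klDivReal (φ y) Q) :=
        klDiv_eq_ofReal_klDivReal (eq_zero_of_mixture_eq_zero hp0 hφ0 hM hy)
    _ ≤ ENNReal.ofReal (klDivReal (fun x => ∑ y, p y * φ y x) Q + log (Fintype.card Y)) :=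
        ENNReal.ofReal_le_ofReal hbound
    _ ≤ _ := by
        rw [klDiv_eq_ofReal_klDivReal hM]
        exact ENNReal.ofReal_add_le

theorem klDiv_mixture_add_log_card_ge_min
    {Y X : Type*} [Fintype Y] [Fintype X] [Nonempty Y] [Nonempty X]
    (p : Y → ℝ) (φ : Y → X → ℝ) (Q : X → ℝ)
    (hp0 : ∀ y, 0 ≤ p y) (hp1 : ∑ y, p y = 1)
    (hφ0 : ∀ y x, 0 ≤ φ y x) (hφ1 : ∀ y, ∑ x, φ y x = 1)
    (hQ0 : ∀ x, 0 ≤ Q x) (hQ1 : ∑ x, Q x = 1) :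
    ⨅ y : {y : Y // 0 < p y}, klDiv (φ y) Q ≤
      klDiv (fun x => ∑ y, p y * φ y x) Q
        + ENNReal.ofReal (Real.log (Fintype.card Y)) :=
  klDiv_mixture_add_log_card_ge_min_general p φ Q hp0 hp1 hφ0 hφ1
end

section
/- Let (Ω, F) be a measurable space, let φ_1, …, φ_M be probability measures on Ω, let D_1, …, D_N be pairwise disjoint measurable subsets of Ω, and let P_1, …, P_N be probability measures on Ω. Let α > 0 and ε ≥ 0. Suppose that for each i = 1, …, N: (a) q_i = Σ_{j=1}^M w_{ij} φ_j is a convex combination of φ_1, …, φ_M; (b) P_i(D_i) ≥ 1 − ε; and (c) the total variation distance satisfies δ(P_i, q_i) ≤ 1 − α/4. Then N · (α/4 − ε) ≤ M. -/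
/-!
Evaluate everything on the sets `D i`. Since `P i` puts mass at least `1 - ε` on `D i` and exceeds
the mixture `q i = ∑ j, w i j • φ j` there by at most `1 - α / 4`, each `q i (D i)` is at least
`α / 4 - ε`. On the other hand, exchanging the order of summation, `∑ i, q i (D i)` is at most
`∑ j, ∑ i, φ j (D i)`, and each inner sum is at most `1` because the `D i` are disjoint. So
`N (α / 4 - ε) ≤ ∑ i, q i (D i) ≤ M`.
-/

open scoped BigOperators ENNReal NNReal
open MeasureTheory

section MixtureMass

variable {Ω ι κ : Type*} [MeasurableSpace Ω] [Fintype ι] [Fintype κ]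

lemma sum_measure_le_one_of_pairwise_disjoint (μ : Measure Ω) [IsProbabilityMeasure μ]
    {D : ι → Set Ω} (hDmeas : ∀ i, MeasurableSet (D i))
    (hDdisj : Pairwise (Function.onFun Disjoint D)) :
    ∑ i, μ (D i) ≤ 1 :=
  (sum_measure_le_measure_univ (fun i _ => (hDmeas i).nullMeasurableSet)
    fun _ _ _ _ hij => (hDdisj hij).aedisjoint).trans_eq measure_univ

lemma sum_mixture_measure_le_card (φ : κ → Measure Ω) (hφ : ∀ j, IsProbabilityMeasure (φ j))
    {D : ι → Set Ω} (hDmeas : ∀ i, MeasurableSet (D i))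
    (hDdisj : Pairwise (Function.onFun Disjoint D))
    (w : ι → κ → ℝ≥0) (hw : ∀ i j, w i j ≤ 1) :
    ∑ i, ∑ j, (w i j : ℝ≥0∞) * φ j (D i) ≤ Fintype.card κ := by
  rw [Finset.sum_comm, ← nsmul_one, ← Finset.card_univ, ← Finset.sum_const]
  refine Finset.sum_le_sum fun j _ => ?_
  calc ∑ i, (w i j : ℝ≥0∞) * φ j (D i)
      ≤ ∑ i, φ j (D i) :=
        Finset.sum_le_sum fun i _ => mul_le_of_le_one_left' (by exact_mod_cast hw i j)
    _ ≤ 1 := sum_measure_le_one_of_pairwise_disjoint (φ j) hDmeas hDdisj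

end MixtureMass

lemma le_one_of_sum_eq_one {κ : Type*} [Fintype κ] {w : κ → ℝ≥0} (hw : ∑ j, w j = 1) (j : κ) :
    w j ≤ 1 :=
  hw ▸ Finset.single_le_sum (fun _ _ => zero_le) (Finset.mem_univ j)

theorem distinguishability_bound_on_memory_size_general
    {Ω : Type*} [MeasurableSpace Ω] (M N : ℕ)
    (φ : Fin M → Measure Ω) (hφ : ∀ j, IsProbabilityMeasure (φ j))
    (D : Fin N → Set Ω) (hDmeas : ∀ i, MeasurableSet (D i))
    (hDdisj : Pairwise (Function.onFun Disjoint D))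
    (P : Fin N → Measure Ω)
    (α ε : ℝ)
    (w : Fin N → Fin M → ℝ≥0) (hw : ∀ i, ∑ j, w i j = 1)
    (hcover : ∀ i, 1 - ε ≤ (P i (D i)).toReal)
    (htv : ∀ i, ∀ A : Set Ω, MeasurableSet A →
      (P i A).toReal - (∑ j, (w i j : ℝ≥0∞) * φ j A).toReal ≤ 1 - α / 4) :
    (N : ℝ) * (α / 4 - ε) ≤ (M : ℝ) := by
  set q : Fin N → ℝ≥0∞ := fun i => ∑ j, (w i j : ℝ≥0∞) * φ j (D i)
  have hq_lower : ∀ i, α / 4 - ε ≤ (q i).toReal := fun i => by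
    linarith [htv i (D i) (hDmeas i), hcover i]
  have hq_sum : ∑ i, q i ≤ M := by
    simpa using sum_mixture_measure_le_card φ hφ hDmeas hDdisj w
      fun i => le_one_of_sum_eq_one (hw i)
  have hq_ne_top : ∀ i ∈ Finset.univ, q i ≠ ⊤ :=
    ENNReal.sum_ne_top.mp (ne_top_of_le_ne_top (ENNReal.natCast_ne_top M) hq_sum)
  calc (N : ℝ) * (α / 4 - ε) = ∑ _i : Fin N, (α / 4 - ε) := by simp [mul_sub]
    _ ≤ ∑ i, (q i).toReal := Finset.sum_le_sum fun i _ => hq_lower i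
    _ = (∑ i, q i).toReal := (ENNReal.toReal_sum hq_ne_top).symm
    _ ≤ M := by
      simpa using ENNReal.toReal_mono (ENNReal.natCast_ne_top M) hq_sum

theorem distinguishability_bound_on_memory_size
    {Ω : Type*} [MeasurableSpace Ω] (M N : ℕ)
    (φ : Fin M → Measure Ω) (hφ : ∀ j, IsProbabilityMeasure (φ j))
    (D : Fin N → Set Ω) (hDmeas : ∀ i, MeasurableSet (D i))
    (hDdisj : Pairwise (Function.onFun Disjoint D))
    (P : Fin N → Measure Ω) (hP : ∀ i, IsProbabilityMeasure (P i))
    (α ε : ℝ) (hα : 0 < α) (hε : 0 ≤ ε)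
    (w : Fin N → Fin M → ℝ≥0) (hw : ∀ i, ∑ j, w i j = 1)
    (hcover : ∀ i, 1 - ε ≤ (P i (D i)).toReal)
    (htv : ∀ i, ∀ A : Set Ω, MeasurableSet A →
      (P i A).toReal - (∑ j, (w i j : ℝ≥0∞) * φ j A).toReal ≤ 1 - α / 4) :
    (N : ℝ) * (α / 4 - ε) ≤ (M : ℝ) :=
  distinguishability_bound_on_memory_size_general M N φ hφ D hDmeas hDdisj P α ε w hw hcover htv
end

section
/- Let φ(u) = (2π)^{-1/2} exp(−u²/2) denote the standard normal density on ℝ. For t > 0 and α ∈ ℝ, define the midpoint-quantized function ψ_{t,α}(u) = φ( α + (⌊(u − α)/t⌋ + 1/2)·t ) and the normalizing constant c_{t,α} = ∫_ℝ ψ_{t,α}(u) du, and set φ_{t,α} = ψ_{t,α}/c_{t,α}. Then 0 < c_{t,α} < ∞ for every t > 0 and α, and the quantized Gaussian converges to the Gaussian in L¹ uniformly in the offset: sup_{α∈[0,t]} ∫_ℝ |φ_{t,α}(u) − φ(u)| du → 0 as t → 0⁺. -/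
open scoped ENNReal
open MeasureTheory

/-- The standard normal density on `ℝ`. -/
noncomputable def stdGauss (u : ℝ) : ℝ :=
  (2 * Real.pi) ^ (-(1 : ℝ) / 2) * Real.exp (-u ^ 2 / 2)

/-- The midpoint quantization of the standard normal density with span `t` and offset `α`. -/
noncomputable def quantGaussUnnormalized (t α u : ℝ) : ℝ :=
  stdGauss (α + ((⌊(u - α) / t⌋ : ℝ) + 1 / 2) * t)

/-- The normalizing constant of the quantized standard normal density. -/
noncomputable def quantGaussConst (t α : ℝ) : ℝ≥0∞ :=
  ∫⁻ u, ENNReal.ofReal (quantGaussUnnormalized t α u)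

/-- The normalized quantized standard normal density. -/
noncomputable def quantGauss (t α u : ℝ) : ℝ :=
  quantGaussUnnormalized t α u / (quantGaussConst t α).toReal

/- ### Auxiliary lemmas -/

lemma qgK_pos : 0 < (2 * Real.pi) ^ (-(1 : ℝ) / 2) :=
  Real.rpow_pos_of_pos (by positivity) _

lemma qgK_le_one : (2 * Real.pi) ^ (-(1 : ℝ) / 2) ≤ 1 :=
  Real.rpow_le_one_of_one_le_of_nonpos (by nlinarith [Real.pi_gt_three]) (by norm_num)

lemma stdGauss_pos (u : ℝ) : 0 < stdGauss u := by
  unfold stdGauss; positivity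

lemma stdGauss_cont : Continuous stdGauss := by
  unfold stdGauss; fun_prop

lemma qg_mid (t α u : ℝ) (ht : 0 < t) :
    |(α + ((⌊(u - α) / t⌋ : ℝ) + 1 / 2) * t) - u| ≤ t / 2 := by
  have h1 : ((⌊(u - α) / t⌋ : ℝ)) * t ≤ u - α := by
    rw [← le_div_iff₀ ht]; exact Int.floor_le _
  have h2 : u - α < ((⌊(u - α) / t⌋ : ℝ) + 1) * t := by
    rw [← div_lt_iff₀ ht]; exact Int.lt_floor_add_one _
  rw [abs_le]; constructor <;> nlinarith

lemma qg_exp_lip_aux {x y : ℝ} (h : x ≤ y) :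
    Real.exp (-x) - Real.exp (-y) ≤ (y - x) * Real.exp (-x) := by
  have hxy : Real.exp (-y) = Real.exp (-x) * Real.exp (x - y) := by
    rw [← Real.exp_add]; ring_nf
  have h1 := Real.add_one_le_exp (x - y)
  nlinarith [Real.exp_pos (-x)]

lemma qg_exp_lip (x y : ℝ) :
    |Real.exp (-x) - Real.exp (-y)| ≤ |x - y| * Real.exp (-min x y) := by
  rcases le_total x y with h | h
  · rw [min_eq_left h, abs_of_nonneg (sub_nonneg.2 (Real.exp_le_exp.2 (by linarith))),
      abs_of_nonpos (by linarith : x - y ≤ 0), neg_sub]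
    exact qg_exp_lip_aux h
  · rw [min_eq_right h, abs_of_nonpos (sub_nonpos.2 (Real.exp_le_exp.2 (by linarith))),
      abs_of_nonneg (by linarith : (0:ℝ) ≤ x - y), neg_sub]
    exact qg_exp_lip_aux h

lemma qg_meas (t α : ℝ) : Measurable (quantGaussUnnormalized t α) := by
  have h1 : Measurable fun u : ℝ => ((⌊(u - α) / t⌋ : ℤ) : ℝ) :=
    measurable_from_top.comp ((measurable_id.sub_const α).div_const t).floor
  exact stdGauss_cont.measurable.comp
    (measurable_const.add ((h1.add_const (1 / 2)).mul_const t))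

lemma qg_sq_lower (t u m : ℝ) (hmu : |m - u| ≤ t / 2) :
    u ^ 2 - t * |u| ≤ m ^ 2 := by
  have hmu' := abs_le.1 hmu
  have k1 : (0:ℝ) ≤ (t / 2 - (m - u)) * (|u| - u) :=
    mul_nonneg (by linarith [hmu'.2]) (by linarith [le_abs_self u])
  have k2 : (0:ℝ) ≤ (t / 2 + (m - u)) * (|u| + u) :=
    mul_nonneg (by linarith [hmu'.1]) (by linarith [neg_abs_le u])
  nlinarith [k1, k2, sq_nonneg (m - u)]

/-- Domination valid for every `t > 0`. -/
lemma qg_le (t α u : ℝ) (ht : 0 < t) :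
    quantGaussUnnormalized t α u ≤ Real.exp (t ^ 2 / 4) * Real.exp (-u ^ 2 / 4) := by
  set m : ℝ := α + ((⌊(u - α) / t⌋ : ℝ) + 1 / 2) * t with hm
  have hmu : |m - u| ≤ t / 2 := qg_mid t α u ht
  have hval : quantGaussUnnormalized t α u
      = (2 * Real.pi) ^ (-(1:ℝ)/2) * Real.exp (-m ^ 2 / 2) := rfl
  clear_value m
  have hsq : u ^ 2 - t * |u| ≤ m ^ 2 := qg_sq_lower t u m hmu
  have hamgm : t * |u| ≤ u ^ 2 / 2 + t ^ 2 / 2 := by nlinarith [sq_nonneg (|u| - t), sq_abs u]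
  have hexp : Real.exp (-m ^ 2 / 2) ≤ Real.exp (t ^ 2 / 4) * Real.exp (-u ^ 2 / 4) := by
    rw [← Real.exp_add]
    apply Real.exp_le_exp.2
    linarith
  calc quantGaussUnnormalized t α u = (2 * Real.pi) ^ (-(1:ℝ)/2) * Real.exp (-m ^ 2 / 2) := hval
    _ ≤ 1 * (Real.exp (t ^ 2 / 4) * Real.exp (-u ^ 2 / 4)) := by
        apply mul_le_mul qgK_le_one hexp (by positivity) (by norm_num)
    _ = _ := by ring

lemma qg_integrable (t α : ℝ) (ht : 0 < t) :
    Integrable (quantGaussUnnormalized t α) := by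
  have hg : Integrable fun u : ℝ => Real.exp (t ^ 2 / 4) * Real.exp (-(1/4 : ℝ) * u ^ 2) :=
    (integrable_exp_neg_mul_sq (by norm_num)).const_mul _
  refine hg.mono' (qg_meas t α).aestronglyMeasurable ?_
  filter_upwards with u
  have hpos : 0 < quantGaussUnnormalized t α u := stdGauss_pos _
  rw [Real.norm_eq_abs, abs_of_pos hpos, show -(1/4 : ℝ) * u ^ 2 = -u ^ 2 / 4 by ring]
  exact qg_le t α u ht

lemma stdGauss_integrable : Integrable stdGauss := by
  have h : Integrable fun u : ℝ =>
      (2 * Real.pi) ^ (-(1:ℝ)/2) * Real.exp (-(1/2 : ℝ) * u ^ 2) :=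
    (integrable_exp_neg_mul_sq (by norm_num)).const_mul _
  refine h.congr (Filter.Eventually.of_forall fun u => ?_)
  show _ * Real.exp (-(1/2 : ℝ) * u ^ 2) = stdGauss u
  unfold stdGauss
  rw [show -(1/2 : ℝ) * u ^ 2 = -u ^ 2 / 2 by ring]

lemma stdGauss_integral : ∫ u, stdGauss u = 1 := by
  have h1 : ∫ u : ℝ, stdGauss u
      = (2 * Real.pi) ^ (-(1:ℝ)/2) * ∫ u : ℝ, Real.exp (-(1/2 : ℝ) * u ^ 2) := by
    rw [← integral_const_mul]
    congr 1; funext u; unfold stdGauss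
    rw [show -(1/2 : ℝ) * u ^ 2 = -u ^ 2 / 2 by ring]
  rw [h1, integral_gaussian]
  have h2 : Real.pi / (1/2 : ℝ) = 2 * Real.pi := by ring
  rw [h2, Real.sqrt_eq_rpow, ← Real.rpow_add (by positivity),
    show -(1:ℝ)/2 + 1/2 = 0 by norm_num, Real.rpow_zero]

lemma qg_const_toReal (t α : ℝ) (ht : 0 < t) :
    (quantGaussConst t α).toReal = ∫ u, quantGaussUnnormalized t α u := by
  have h := MeasureTheory.integral_eq_lintegral_of_nonneg_ae (μ := volume)
    (f := quantGaussUnnormalized t α)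
    (Filter.Eventually.of_forall fun u => (stdGauss_pos _).le)
    (qg_meas t α).aestronglyMeasurable
  rw [quantGaussConst]
  exact h.symm

/-- The key pointwise bound, for `0 < t ≤ 1`. -/
lemma qg_point (t α u : ℝ) (ht : 0 < t) (ht1 : t ≤ 1) :
    |quantGaussUnnormalized t α u - stdGauss u|
      ≤ t * ((|u| + 1) * Real.exp (-u ^ 2 / 4)) := by
  set m : ℝ := α + ((⌊(u - α) / t⌋ : ℝ) + 1 / 2) * t with hm
  have hmu : |m - u| ≤ t / 2 := qg_mid t α u ht
  have hmu' := abs_le.1 hmu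
  have hK := qgK_le_one
  have hKpos := qgK_pos
  have key : |quantGaussUnnormalized t α u - stdGauss u|
      = (2 * Real.pi) ^ (-(1:ℝ)/2) * |Real.exp (-(m ^ 2 / 2)) - Real.exp (-(u ^ 2 / 2))| := by
    unfold quantGaussUnnormalized stdGauss
    rw [← hm, ← mul_sub, abs_mul, abs_of_pos hKpos, show -m ^ 2 / 2 = -(m ^ 2 / 2) by ring,
      show -u ^ 2 / 2 = -(u ^ 2 / 2) by ring]
  rw [key]
  clear_value m
  have hlip := qg_exp_lip (m ^ 2 / 2) (u ^ 2 / 2)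
  have hmabs : |m| ≤ |u| + t / 2 := by
    calc |m| = |u + (m - u)| := by ring_nf
      _ ≤ |u| + |m - u| := abs_add_le _ _
      _ ≤ |u| + t / 2 := by linarith
  have hdiff : |m ^ 2 / 2 - u ^ 2 / 2| ≤ t / 2 * (|u| + 1) := by
    have h1 : m ^ 2 / 2 - u ^ 2 / 2 = (m - u) * (m + u) / 2 := by ring
    rw [h1, abs_div, abs_mul, abs_two]
    have h2 : |m + u| ≤ 2 * |u| + t / 2 := by
      calc |m + u| ≤ |m| + |u| := abs_add_le _ _
        _ ≤ 2 * |u| + t / 2 := by linarith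
    have h3 : |m - u| * |m + u| ≤ (t / 2) * (2 * |u| + t / 2) := by
      apply mul_le_mul hmu h2 (abs_nonneg _) (by linarith)
    nlinarith [abs_nonneg u]
  have hsq : u ^ 2 - t * |u| ≤ m ^ 2 := qg_sq_lower t u m hmu
  have hmin : u ^ 2 / 4 - 1 / 4 ≤ min (m ^ 2 / 2) (u ^ 2 / 2) := by
    apply le_min
    · nlinarith [sq_nonneg (|u| - 1), sq_abs u, abs_nonneg u]
    · nlinarith [sq_nonneg u]
  have hexpmin : Real.exp (-min (m ^ 2 / 2) (u ^ 2 / 2))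
      ≤ Real.exp (1/4 : ℝ) * Real.exp (-u ^ 2 / 4) := by
    rw [← Real.exp_add]
    apply Real.exp_le_exp.2
    linarith
  have he14 : Real.exp (1/4 : ℝ) ≤ 2 := by
    have h4 : Real.exp (1/4 : ℝ) ^ (4:ℕ) = Real.exp 1 := by
      rw [← Real.exp_nat_mul]; norm_num
    have he1 : Real.exp (1/4 : ℝ) ^ (4:ℕ) ≤ 2 ^ (4:ℕ) := by
      rw [h4]
      have := Real.exp_one_lt_d9
      norm_num
      linarith
    exact le_of_pow_le_pow_left₀ (by norm_num) (by norm_num) he1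
  have hE : (0:ℝ) ≤ Real.exp (-u ^ 2 / 4) := (Real.exp_pos _).le
  calc (2 * Real.pi) ^ (-(1:ℝ)/2) * |Real.exp (-(m ^ 2 / 2)) - Real.exp (-(u ^ 2 / 2))|
      ≤ 1 * (|m ^ 2 / 2 - u ^ 2 / 2| * Real.exp (-min (m ^ 2 / 2) (u ^ 2 / 2))) := by
        apply mul_le_mul hK hlip (abs_nonneg _) (by norm_num)
    _ ≤ 1 * ((t / 2 * (|u| + 1)) * (Real.exp (1/4 : ℝ) * Real.exp (-u ^ 2 / 4))) := by
        rw [one_mul, one_mul]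
        apply mul_le_mul hdiff hexpmin (Real.exp_pos _).le
        positivity
    _ ≤ (t / 2 * (|u| + 1)) * (2 * Real.exp (-u ^ 2 / 4)) := by
        rw [one_mul]
        apply mul_le_mul_of_nonneg_left (mul_le_mul_of_nonneg_right he14 hE)
        positivity
    _ = t * ((|u| + 1) * Real.exp (-u ^ 2 / 4)) := by ring

/-- The dominating function for the L¹ estimate and its integrability. -/
lemma qg_env_integrable : Integrable fun u : ℝ => (|u| + 1) * Real.exp (-u ^ 2 / 4) := by
  have h1 : Integrable fun u : ℝ => |u| * Real.exp (-(1/4 : ℝ) * u ^ 2) := by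
    have := (integrable_mul_exp_neg_mul_sq (b := 1/4) (by norm_num)).abs
    refine this.congr (Filter.Eventually.of_forall fun u => ?_)
    show |u * Real.exp (-(1/4 : ℝ) * u ^ 2)| = |u| * Real.exp (-(1/4 : ℝ) * u ^ 2)
    rw [abs_mul, Real.abs_exp]
  have h2 : Integrable fun u : ℝ => Real.exp (-(1/4 : ℝ) * u ^ 2) :=
    integrable_exp_neg_mul_sq (by norm_num)
  refine (h1.add h2).congr (Filter.Eventually.of_forall fun u => ?_)
  show |u| * Real.exp (-(1/4 : ℝ) * u ^ 2) + Real.exp (-(1/4 : ℝ) * u ^ 2)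
      = (|u| + 1) * Real.exp (-u ^ 2 / 4)
  rw [show -(1/4 : ℝ) * u ^ 2 = -u ^ 2 / 4 by ring]
  ring

theorem quantized_gaussian_l1_convergence :
    (∀ t : ℝ, 0 < t → ∀ α : ℝ, 0 < quantGaussConst t α ∧ quantGaussConst t α < ⊤) ∧
    (∀ ε : ℝ, 0 < ε → ∃ δ : ℝ, 0 < δ ∧ ∀ t : ℝ, 0 < t → t < δ →
      ∀ α ∈ Set.Icc (0 : ℝ) t, (∫ u, |quantGauss t α u - stdGauss u|) < ε) := by
  have hconst : ∀ t : ℝ, 0 < t → ∀ α : ℝ,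
      0 < quantGaussConst t α ∧ quantGaussConst t α < ⊤ := by
    intro t ht α
    constructor
    · rw [quantGaussConst, lintegral_pos_iff_support
        ((qg_meas t α).ennreal_ofReal)]
      have : Function.support (fun u => ENNReal.ofReal (quantGaussUnnormalized t α u))
          = Set.univ := by
        ext u
        simp only [Function.mem_support, Set.mem_univ, iff_true]
        exact (ENNReal.ofReal_pos.2 (stdGauss_pos _)).ne'
      rw [this]
      simp
    · have := (qg_integrable t α ht).lintegral_lt_top
      exact this
  refine ⟨hconst, ?_⟩
  intro ε hε
  set g : ℝ → ℝ := fun u => (|u| + 1) * Real.exp (-u ^ 2 / 4) with hg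
  set C : ℝ := ∫ u, g u with hC
  have hgnn : ∀ u, 0 ≤ g u := fun u => by positivity
  have hCnn : 0 ≤ C := integral_nonneg hgnn
  -- key L¹ bound
  have hl1 : ∀ t : ℝ, 0 < t → t ≤ 1 → ∀ α : ℝ,
      (∫ u, |quantGaussUnnormalized t α u - stdGauss u|) ≤ t * C := by
    intro t ht ht1 α
    have hint : Integrable fun u => |quantGaussUnnormalized t α u - stdGauss u| :=
      ((qg_integrable t α ht).sub stdGauss_integrable).abs
    have hintg : Integrable fun u => t * g u := qg_env_integrable.const_mul t
    calc (∫ u, |quantGaussUnnormalized t α u - stdGauss u|)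
        ≤ ∫ u, t * g u := by
          apply integral_mono hint hintg
          intro u
          exact qg_point t α u ht ht1
      _ = t * C := by rw [integral_const_mul]
    -- done
  -- choose δ
  refine ⟨min 1 (min (1 / (2 * C + 1)) (ε / (4 * C + 1))), ?_, ?_⟩
  · have : (0:ℝ) < 1 / (2 * C + 1) := by positivity
    have : (0:ℝ) < ε / (4 * C + 1) := by positivity
    positivity
  intro t ht htδ α hα
  have ht1 : t ≤ 1 := le_of_lt (lt_of_lt_of_le htδ (min_le_left _ _))
  have htC1 : t < 1 / (2 * C + 1) :=
    lt_of_lt_of_le htδ ((min_le_right _ _).trans (min_le_left _ _))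
  have htC2 : t < ε / (4 * C + 1) :=
    lt_of_lt_of_le htδ ((min_le_right _ _).trans (min_le_right _ _))
  have hl1' := hl1 t ht ht1 α
  set c : ℝ := (quantGaussConst t α).toReal with hc
  have hcint : c = ∫ u, quantGaussUnnormalized t α u := qg_const_toReal t α ht
  -- |c - 1| ≤ t C
  have hcd : |c - 1| ≤ t * C := by
    have h1 : c - 1 = ∫ u, (quantGaussUnnormalized t α u - stdGauss u) := by
      rw [integral_sub (qg_integrable t α ht) stdGauss_integrable, ← hcint, stdGauss_integral]
    rw [h1]
    calc |∫ u, (quantGaussUnnormalized t α u - stdGauss u)|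
        ≤ ∫ u, |quantGaussUnnormalized t α u - stdGauss u| := by
          simpa [Real.norm_eq_abs] using
            norm_integral_le_integral_norm (fun u => quantGaussUnnormalized t α u - stdGauss u)
      _ ≤ t * C := hl1'
  have htChalf : t * C < 1 / 2 := by
    have h2C : (0:ℝ) < 2 * C + 1 := by linarith
    have h := (lt_div_iff₀ h2C).1 htC1
    nlinarith [mul_nonneg ht.le hCnn]
  have hcpos : (1:ℝ)/2 < c := by
    have := abs_le.1 hcd
    linarith
  have hcpos' : (0:ℝ) < c := by linarith
  -- final bound
  have hfinal : (∫ u, |quantGauss t α u - stdGauss u|) ≤ 2 * (t * C) / c := by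
    have hptwise : ∀ u, |quantGauss t α u - stdGauss u|
        ≤ c⁻¹ * |quantGaussUnnormalized t α u - stdGauss u| + (|1 - c| * c⁻¹) * stdGauss u := by
      intro u
      have : quantGauss t α u - stdGauss u
          = c⁻¹ * (quantGaussUnnormalized t α u - stdGauss u) + ((1 - c) * c⁻¹) * stdGauss u := by
        rw [quantGauss, ← hc]
        field_simp
        ring
      rw [this]
      calc |c⁻¹ * (quantGaussUnnormalized t α u - stdGauss u) + ((1 - c) * c⁻¹) * stdGauss u|
          ≤ |c⁻¹ * (quantGaussUnnormalized t α u - stdGauss u)| + |((1 - c) * c⁻¹) * stdGauss u| :=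
            abs_add_le _ _
        _ = c⁻¹ * |quantGaussUnnormalized t α u - stdGauss u| + (|1 - c| * c⁻¹) * stdGauss u := by
            rw [abs_mul, abs_mul, abs_mul, abs_of_nonneg (by positivity : (0:ℝ) ≤ c⁻¹),
              abs_of_pos (stdGauss_pos u)]
    have hint1 : Integrable fun u => |quantGaussUnnormalized t α u - stdGauss u| :=
      ((qg_integrable t α ht).sub stdGauss_integrable).abs
    have hintR : Integrable fun u =>
        c⁻¹ * |quantGaussUnnormalized t α u - stdGauss u| + (|1 - c| * c⁻¹) * stdGauss u :=
      (hint1.const_mul _).add (stdGauss_integrable.const_mul _)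
    have hintL : Integrable fun u => |quantGauss t α u - stdGauss u| := by
      have : (fun u => quantGauss t α u) = fun u => c⁻¹ * quantGaussUnnormalized t α u := by
        funext u; rw [quantGauss, ← hc]; field_simp
      have h2 : Integrable fun u => quantGauss t α u := by
        rw [this]; exact (qg_integrable t α ht).const_mul _
      exact (h2.sub stdGauss_integrable).abs
    calc (∫ u, |quantGauss t α u - stdGauss u|)
        ≤ ∫ u, (c⁻¹ * |quantGaussUnnormalized t α u - stdGauss u|
            + (|1 - c| * c⁻¹) * stdGauss u) := integral_mono hintL hintR hptwise
      _ = c⁻¹ * (∫ u, |quantGaussUnnormalized t α u - stdGauss u|)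
            + (|1 - c| * c⁻¹) * ∫ u, stdGauss u := by
          rw [integral_add (hint1.const_mul _) (stdGauss_integrable.const_mul _),
            integral_const_mul, integral_const_mul]
      _ ≤ c⁻¹ * (t * C) + (t * C) * c⁻¹ := by
          rw [stdGauss_integral, mul_one]
          have h1 : c⁻¹ * (∫ u, |quantGaussUnnormalized t α u - stdGauss u|) ≤ c⁻¹ * (t * C) :=
            mul_le_mul_of_nonneg_left hl1' (by positivity)
          have h2 : |1 - c| * c⁻¹ ≤ (t * C) * c⁻¹ := by
            apply mul_le_mul_of_nonneg_right _ (by positivity)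
            rw [abs_sub_comm] at hcd
            exact hcd
          linarith
      _ = 2 * (t * C) / c := by field_simp; ring
  have hlast : 2 * (t * C) / c < ε := by
    have h4C : (0:ℝ) < 4 * C + 1 := by linarith
    have h1 : 2 * (t * C) / c ≤ 4 * (t * C) := by
      rw [div_le_iff₀ hcpos']
      nlinarith [mul_nonneg ht.le hCnn]
    have h2 : t * (4 * C + 1) < ε := (lt_div_iff₀ h4C).1 htC2
    nlinarith [mul_nonneg ht.le hCnn]
  calc (∫ u, |quantGauss t α u - stdGauss u|) ≤ 2 * (t * C) / c := hfinal
    _ < ε := hlast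
end
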